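/- Let D be a directed graph and σ an acyclic circuit signature of D. Let tree(D,σ) be the set of spanning trees T such that for every non-tree edge f, f lies in the positive arc of σ applied to the fundamental cycle C(T,f). Then for any two distinct trees T_1, T_2 ∈ tree(D,σ), the simplices Q̃_{T_1} and Q̃_{T_2} have disjoint interiors. -/

import Mathlib

open Finset Pointwise

noncomputable section

variable {V E ι : Type*}

/-- The vector `x_f ∈ ℝ^V` of an edge `f` with tail `t f` and head `h f`:
`+1` at the head, `-1` at the tail, `0` elsewhere (so `0` for a loop). -/
def xvec [DecidableEq V] (t h : E → V) (f : E) : V → ℝ :=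
  fun v => (if v = h f then 1 else 0) - (if v = t f then 1 else 0)

/-- The extended root polytope of the subgraph with edge set `S`:
`conv({0} ∪ {x_f : f ∈ S})`. -/
def rootPolyOn [DecidableEq V] (t h : E → V) (S : Set E) : Set (V → ℝ) :=
  convexHull ℝ ({0} ∪ (xvec t h '' S))

/-- The underlying (simple) undirected graph of the edges in `S`. -/
def underlyingOn (t h : E → V) (S : Set E) : SimpleGraph V :=
  SimpleGraph.fromRel (fun u v => ∃ f ∈ S, t f = u ∧ h f = v)

/-- A spanning tree: a set of edges whose underlying graph is connected and which
has `|V| - 1` edges. -/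
def IsSpanningTree [Fintype V] (t h : E → V) (T : Finset E) : Prop :=
  (underlyingOn t h ↑T).Connected ∧ T.card + 1 = Fintype.card V

/-- The number of lattice points of the `k`-th dilate of `Q`. -/
def latCount [Fintype ι] (Q : Set (ι → ℝ)) (k : ℕ) : ℕ :=
  Nat.card {p : ι → ℤ // (fun i => (p i : ℝ)) ∈ (k : ℝ) • Q}

/-- The Ehrhart series of `Q` as a formal power series. -/
def ehrSeries [Fintype ι] (Q : Set (ι → ℝ)) : PowerSeries ℤ :=
  PowerSeries.mk fun k => (latCount Q k : ℤ)

/-- The dimension of a polytope: the rank of its vector span. -/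
def pdim (Q : Set (ι → ℝ)) : ℕ := Module.finrank ℝ ↥(vectorSpan ℝ Q)

/-- `p` is the `h^*`-polynomial of `Q`: `(1-t)^{dim Q + 1} · Ehr_Q(t) = p(t)`. -/
def IsHStar [Fintype ι] (Q : Set (ι → ℝ)) (p : Polynomial ℤ) : Prop :=
  (1 - PowerSeries.X) ^ (pdim Q + 1) * ehrSeries Q = PowerSeries.mk fun i => p.coeff i

/-- The `±1` vector of a signed cycle with positive arc `Cp` and negative arc `Cm`. -/
def chiVec [DecidableEq E] (Cp Cm : Finset E) : E → ℝ :=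
  fun f => (if f ∈ Cp then 1 else 0) - (if f ∈ Cm then 1 else 0)

/-- A circulation: an assignment of reals to edges with zero net flow at each vertex. -/
def IsCirculation [Fintype E] [DecidableEq V] (t h : E → V) (φ : E → ℝ) : Prop :=
  ∑ f, φ f • xvec t h f = 0

/-- `(Cp, Cm)` is a signed cycle: the arcs are disjoint, the union is nonempty, the
`±1` vector is a circulation, and the support `Cp ∪ Cm` is minimal among supports of
nonzero circulations (i.e. it is a circuit of the graphic oriented matroid). -/
def IsSignedCycle [Fintype E] [DecidableEq E] [DecidableEq V] (t h : E → V)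
    (Cp Cm : Finset E) : Prop :=
  Disjoint Cp Cm ∧ (Cp ∪ Cm).Nonempty ∧ IsCirculation t h (chiVec Cp Cm) ∧
    ∀ φ : E → ℝ, IsCirculation t h φ → φ ≠ 0 →
      (∀ f, φ f ≠ 0 → f ∈ Cp ∪ Cm) → ∀ f ∈ Cp ∪ Cm, φ f ≠ 0

/-- A circuit signature: a choice, for each cycle, of exactly one of its two
orientations. -/
def IsCircuitSignature [Fintype E] [DecidableEq E] [DecidableEq V] (t h : E → V)
    (σ : Set (Finset E × Finset E)) : Prop :=
  (∀ q ∈ σ, IsSignedCycle t h q.1 q.2) ∧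
    ∀ Cp Cm : Finset E, IsSignedCycle t h Cp Cm → ((Cp, Cm) ∈ σ ↔ (Cm, Cp) ∉ σ)

/-- Acyclicity of a circuit signature: no nontrivial nonnegative combination of the
vectors of the chosen signed cycles vanishes. -/
def IsAcyclicSig [DecidableEq E] (σ : Set (Finset E × Finset E)) : Prop :=
  ∀ (s : Finset (Finset E × Finset E)) (a : Finset E × Finset E → ℝ),
    ↑s ⊆ σ → (∀ q, 0 ≤ a q) → (∃ q ∈ s, a q ≠ 0) →
      ∑ q ∈ s, a q • chiVec q.1 q.2 ≠ 0

/-- A weight function is generic if the two arcs of every cycle have different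
total weights. -/
def GenericWeight [Fintype E] [DecidableEq E] [DecidableEq V] (t h : E → V)
    (w : E → ℝ) : Prop :=
  ∀ Cp Cm : Finset E, IsSignedCycle t h Cp Cm → ∑ f ∈ Cp, w f ≠ ∑ f ∈ Cm, w f

/-- The circuit signature `cir^w`: orient each cycle so that the positive arc has
the larger total `w`-weight. -/
def cirw [Fintype E] [DecidableEq E] [DecidableEq V] (t h : E → V) (w : E → ℝ) :
    Set (Finset E × Finset E) :=
  {q | IsSignedCycle t h q.1 q.2 ∧ ∑ f ∈ q.2, w f < ∑ f ∈ q.1, w f}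

/-- `tree(D,σ)`: spanning trees `T` such that every non-tree edge `f` lies in the
positive arc of the (σ-oriented) fundamental cycle of `f`, i.e. of the unique cycle
contained in `T ∪ {f}`. -/
def treeSet [Fintype V] [Fintype E] [DecidableEq V] [DecidableEq E] (t h : E → V)
    (σ : Set (Finset E × Finset E)) : Set (Finset E) :=
  {T | IsSpanningTree t h T ∧
    ∀ f ∉ T, ∀ Cp Cm : Finset E, (Cp, Cm) ∈ σ → Cp ∪ Cm ⊆ insert f T → f ∈ Cp}

/-- `F` is a face of `Q`: the locus where some linear functional bounded above on `Q`
attains its maximum. -/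
def IsFaceOf (Q F : Set (ι → ℝ)) : Prop :=
  ∃ (l : (ι → ℝ) →ₗ[ℝ] ℝ) (c : ℝ), (∀ y ∈ Q, l y ≤ c) ∧ F = {y ∈ Q | l y = c}

/-- `F` is a facet of `Q`: a face of codimension one. -/
def IsFacetOf (Q F : Set (ι → ℝ)) : Prop :=
  IsFaceOf Q F ∧ pdim F + 1 = pdim Q

end

/-!
A point `p` in the relative interiors of both `Q̃_{T₁}` and `Q̃_{T₂}` is a combination
`∑ a₁ f • x_f = ∑ a₂ f • x_f` whose coefficients are positive exactly on `T₁`, resp. `T₂`.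
Then `a₁ - a₂` is a nonzero circulation, so it contains a signed cycle `(C⁺, C⁻)` conformal to
it, and `C⁺ ⊆ T₁`, `C⁻ ⊆ T₂`. Whichever orientation of this cycle `σ` picks, its positive arc
lies in a tree `T ∈ tree(D,σ)`, which is impossible: adding to it the `σ`-oriented fundamental
cycles of the edges of its negative arc outside `T` cancels every non-tree edge, so this
nonnegative combination of `σ`-cycles is a circulation supported on a spanning tree, hence
zero, against acyclicity of `σ`.
-/

open Topology Finset Function

section Convexity

variable {E : Type*} [AddCommGroup E] [Module ℝ E]

theorem convexHull_range_eq_image_stdSimplex {ι : Type*} [Fintype ι] (v : ι → E) :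
    convexHull ℝ (Set.range v) = Fintype.linearCombination ℝ v '' stdSimplex ℝ ι := by
  classical
  rw [← convexHull_rangle_single_eq_stdSimplex, LinearMap.image_convexHull, ← Set.range_comp]
  congr 2
  funext i
  simp [Fintype.linearCombination_apply, Pi.single_apply]

variable [TopologicalSpace E] [IsTopologicalAddGroup E] [ContinuousSMul ℝ E]

theorem exists_pos_add_smul_sub_mem_of_mem_intrinsicInterior {s : Set E} {p q : E}
    (hp : p ∈ intrinsicInterior ℝ s) (hq : q ∈ s) : ∃ ε : ℝ, 0 < ε ∧ p + ε • (p - q) ∈ s := by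
  obtain ⟨y, hy, rfl⟩ := hp
  have hmem (ε : ℝ) : (y : E) + ε • ((y : E) - q) ∈ affineSpan ℝ s := by
    simpa [vsub_eq_sub, vadd_eq_add, add_comm] using
      AffineSubspace.smul_vsub_vadd_mem _ ε y.2 (subset_affineSpan ℝ s hq) y.2
  let g : ℝ → affineSpan ℝ s := fun ε => ⟨_, hmem ε⟩
  have hg : Continuous g := by fun_prop
  have hg0 : g 0 = y := by ext; simp [g]
  have hev : ∀ᶠ ε in 𝓝[>] (0 : ℝ), g ε ∈ interior ((↑) ⁻¹' s) :=
    Filter.Eventually.filter_mono nhdsWithin_le_nhds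
      (hg.continuousAt.preimage_mem_nhds (hg0 ▸ isOpen_interior.mem_nhds hy))
  obtain ⟨ε, hεs, hε⟩ := (hev.and self_mem_nhdsWithin).exists
  exact ⟨ε, hε, (interior_subset hεs : g ε ∈ (↑) ⁻¹' s)⟩

theorem exists_pos_weights_of_mem_intrinsicInterior_convexHull {ι : Type*} [Fintype ι]
    {v : ι → E} {p : E} (hp : p ∈ intrinsicInterior ℝ (convexHull ℝ (Set.range v))) :
    ∃ w : ι → ℝ, (∀ i, 0 < w i) ∧ ∑ i, w i • v i = p := by
  have hι : Nonempty ι := by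
    by_contra! hι
    simp [Set.range_eq_empty] at hp
  set n : ℝ := (Fintype.card ι : ℝ)
  have hn : 0 < n := by positivity
  have hq : ∑ i, n⁻¹ • v i ∈ convexHull ℝ (Set.range v) := by
    rw [convexHull_range_eq_image_stdSimplex]
    exact ⟨fun _ => n⁻¹, ⟨fun _ => by positivity, by simp [n]⟩,
      by simp [Fintype.linearCombination_apply]⟩
  obtain ⟨ε, hε, hεp⟩ := exists_pos_add_smul_sub_mem_of_mem_intrinsicInterior hp hq
  rw [convexHull_range_eq_image_stdSimplex] at hεp
  obtain ⟨μ, ⟨hμ, -⟩, hμp⟩ := hεp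
  rw [Fintype.linearCombination_apply] at hμp
  refine ⟨fun i => (1 + ε)⁻¹ * (μ i + ε * n⁻¹), fun i => by have := hμ i; positivity, ?_⟩
  have hscaled : (1 + ε) • p = ∑ i, (μ i + ε * n⁻¹) • v i := by
    simp only [add_smul, Finset.sum_add_distrib, hμp, mul_smul, ← Finset.smul_sum]
    module
  simp_rw [mul_smul]
  rw [← Finset.smul_sum, ← hscaled, smul_smul, inv_mul_cancel₀ (by positivity), one_smul]

end Convexity

theorem Function.periodicPts_nonempty {α : Type*} [Finite α] [Nonempty α] (f : α → α) :
    (periodicPts f).Nonempty := by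
  obtain ⟨a⟩ := ‹Nonempty α›
  obtain ⟨m, n, hmn, heq⟩ := Finite.exists_ne_map_eq_of_infinite fun n => f^[n] a
  wlog hlt : m < n generalizing m n
  · exact this n m hmn.symm heq.symm (hmn.lt_or_gt.resolve_left hlt)
  refine ⟨f^[m] a, mk_mem_periodicPts (Nat.sub_pos_of_lt hlt) ?_⟩
  rw [IsPeriodicPt, IsFixedPt, ← iterate_add_apply, Nat.sub_add_cancel hlt.le]
  exact heq.symm

theorem Function.exists_injective_zmod_iterate {α : Type*} [Finite α] [Nonempty α] (f : α → α) :
    ∃ (k : ℕ) (_ : NeZero k) (x : ZMod k → α), Injective x ∧ ∀ j, x (j + 1) = f (x j) := by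
  obtain ⟨y, hy⟩ := periodicPts_nonempty f
  have hk := minimalPeriod_pos_of_mem_periodicPts hy
  have : NeZero (minimalPeriod f y) := ⟨hk.ne'⟩
  refine ⟨minimalPeriod f y, inferInstance, fun j => f^[j.val] y, ?_, fun j => ?_⟩
  · exact fun i j hij => ZMod.val_injective _
      (iterate_injOn_Iio_minimalPeriod (ZMod.val_lt i) (ZMod.val_lt j) hij)
  · simp only
    rw [ZMod.val_add, ZMod.val_one_eq_one_mod, Nat.add_mod_mod, iterate_mod_minimalPeriod_eq,
      iterate_succ_apply']

theorem ZMod.apply_eq_apply_zero_of_forall_sub_one {k : ℕ} [NeZero k] {α : Type*}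
    {c : ZMod k → α} (hc : ∀ i, c (i - 1) = c i) (i : ZMod k) : c i = c 0 := by
  have hnat : ∀ n : ℕ, c n = c 0 := by
    intro n
    induction n with
    | zero => simp
    | succ n ih => rw [← ih, ← hc, Nat.cast_succ, add_sub_cancel_right]
  rw [← ZMod.natCast_zmod_val i, hnat]

section Graph

variable {V E : Type*} {t h : E → V}

theorem rootPolyOn_eq_convexHull_range [DecidableEq V] (T : Finset E) :
    rootPolyOn t h ↑T =
      convexHull ℝ (Set.range fun o : Option T => o.elim 0 (xvec t h ∘ Subtype.val)) := by
  rw [rootPolyOn, Option.range_elim, Set.range_comp, Subtype.range_coe, Set.insert_eq]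

theorem exists_pos_of_mem_intrinsicInterior_rootPolyOn [Fintype E] [DecidableEq V] {T : Finset E}
    {p : V → ℝ} (hp : p ∈ intrinsicInterior ℝ (rootPolyOn t h ↑T)) :
    ∃ a : E → ℝ, 0 ≤ a ∧ (∀ f, 0 < a f ↔ f ∈ T) ∧ ∑ f, a f • xvec t h f = p := by
  classical
  rw [rootPolyOn_eq_convexHull_range] at hp
  obtain ⟨w, hw, rfl⟩ := exists_pos_weights_of_mem_intrinsicInterior_convexHull hp
  refine ⟨fun f => if hf : f ∈ T then w (some ⟨f, hf⟩) else 0,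
    fun f => by by_cases hf : f ∈ T <;> simp [hf, (hw _).le],
    fun f => by by_cases hf : f ∈ T <;> simp [hf, hw], ?_⟩
  rw [Fintype.sum_option, Option.elim_none, smul_zero, zero_add,
    ← Finset.sum_subset (Finset.subset_univ T) (fun f _ hf => by simp [hf]),
    ← Finset.sum_coe_sort T]
  simp

theorem xvec_eq_single_sub_single [DecidableEq V] (f : E) :
    xvec t h f = Pi.single (h f) 1 - Pi.single (t f) 1 := by
  funext v
  simp [xvec, Pi.single_apply]

def IsConformalStep (t h : E → V) (φ : E → ℝ) (u v : V) (e : E) : Prop :=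
  (0 < φ e ∧ t e = u ∧ h e = v) ∨ (φ e < 0 ∧ h e = u ∧ t e = v)

namespace IsConformalStep

variable {φ : E → ℝ} {u v u' v' : V} {e : E}

theorem ne_zero (hs : IsConformalStep t h φ u v e) : φ e ≠ 0 := by
  rcases hs with ⟨hφ, -⟩ | ⟨hφ, -⟩ <;> [exact hφ.ne'; exact hφ.ne]

theorem xvec_eq [DecidableEq V] (hs : IsConformalStep t h φ u v e) :
    xvec t h e = Real.sign (φ e) • (Pi.single v 1 - Pi.single u 1) := by
  rw [xvec_eq_single_sub_single]
  rcases hs with ⟨hφ, rfl, rfl⟩ | ⟨hφ, rfl, rfl⟩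
  · simp [Real.sign_of_pos hφ]
  · simp [Real.sign_of_neg hφ]

theorem source_eq (hs : IsConformalStep t h φ u v e) (hs' : IsConformalStep t h φ u' v' e) :
    u = u' := by
  rcases hs with ⟨hφ, rfl, -⟩ | ⟨hφ, rfl, -⟩ <;>
    rcases hs' with ⟨hφ', h', -⟩ | ⟨hφ', h', -⟩ <;> first | exact h' | linarith

theorem mul_xvec_target_pos [DecidableEq V] (hs : IsConformalStep t h φ u v e) (huv : u ≠ v) :
    0 < φ e * xvec t h e v := by
  rcases hs with ⟨hφ, rfl, rfl⟩ | ⟨hφ, rfl, rfl⟩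
  · simp [xvec, Ne.symm huv, hφ]
  · simp [xvec, Ne.symm huv, hφ]

end IsConformalStep

theorem exists_isConformalStep_of_mul_xvec_neg [DecidableEq V] {φ : E → ℝ} {e : E} {u : V}
    (he : φ e * xvec t h e u < 0) : ∃ v, v ≠ u ∧ IsConformalStep t h φ u v e := by
  by_cases hh : u = h e <;> by_cases ht : u = t e
  · simp [xvec, ← hh, ← ht] at he
  · subst hh
    exact ⟨t e, Ne.symm ht, Or.inr ⟨by simpa [xvec, ht] using he, rfl, rfl⟩⟩
  · subst ht
    exact ⟨h e, Ne.symm hh, Or.inl ⟨by simpa [xvec, hh] using he, rfl, rfl⟩⟩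
  · simp [xvec, hh, ht] at he

theorem isCirculation_sum [Fintype E] [DecidableEq V] {ι : Type*} (s : Finset ι) {φ : ι → E → ℝ}
    (hφ : ∀ i ∈ s, IsCirculation t h (φ i)) : IsCirculation t h (∑ i ∈ s, φ i) := by
  rw [IsCirculation]
  simp only [Finset.sum_apply, Finset.sum_smul]
  rw [sum_comm]
  exact sum_eq_zero hφ

theorem IsCirculation.exists_mul_xvec_neg [Fintype E] [DecidableEq V] {φ : E → ℝ}
    (hφ : IsCirculation t h φ) {e : E} {v : V} (he : 0 < φ e * xvec t h e v) :
    ∃ g, φ g * xvec t h g v < 0 := by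
  have hv : ∑ g, φ g * xvec t h g v = 0 := by simpa [Finset.sum_apply] using congrFun hφ v
  by_contra! hnn
  linarith [Finset.sum_pos' (fun g _ => hnn g) ⟨e, Finset.mem_univ _, he⟩]

section ConformalCycle

variable {φ : E → ℝ} {k : ℕ} {U : ZMod k → V} {d : ZMod k → E}

theorem injective_of_isConformalStep (hU : Injective U)
    (hd : ∀ j, IsConformalStep t h φ (U j) (U (j + 1)) (d j)) : Injective d :=
  fun a b hab => hU ((hd a).source_eq (hab ▸ hd b))

variable [NeZero k]

theorem sum_smul_single_sub_single_apply [DecidableEq V] (hU : Injective U) (c : ZMod k → ℝ)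
    (i : ZMod k) :
    (∑ j, c j • (Pi.single (U (j + 1)) 1 - Pi.single (U j) 1 : V → ℝ)) (U i) =
      c (i - 1) - c i := by
  have hshift (j : ZMod k) : i = j + 1 ↔ j = i - 1 := by rw [eq_sub_iff_add_eq, eq_comm]
  simp [Finset.sum_apply, Pi.single_apply, hU.eq_iff, hshift, mul_sub, sum_sub_distrib]

theorem sum_smul_xvec_eq_of_isConformalStep [Fintype E] [DecidableEq V] [DecidableEq E]
    (hU : Injective U) (hd : ∀ j, IsConformalStep t h φ (U j) (U (j + 1)) (d j))
    {ψ : E → ℝ} (hψ : ∀ e, ψ e ≠ 0 → e ∈ univ.image d) :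
    ∑ e, ψ e • xvec t h e =
      ∑ j, (Real.sign (φ (d j)) * ψ (d j)) •
        (Pi.single (U (j + 1)) 1 - Pi.single (U j) 1 : V → ℝ) := by
  rw [← sum_subset (subset_univ _) fun e _ he => by rw [not_imp_comm.mp (hψ e) he, zero_smul],
    sum_image fun a _ b _ hab => injective_of_isConformalStep hU hd hab]
  refine sum_congr rfl fun j _ => ?_
  rw [(hd j).xvec_eq, smul_smul, mul_comm]

theorem sign_mul_apply_eq_of_isConformalStep [Fintype E] [DecidableEq V] [DecidableEq E]
    (hU : Injective U) (hd : ∀ j, IsConformalStep t h φ (U j) (U (j + 1)) (d j))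
    {ψ : E → ℝ} (hψ : IsCirculation t h ψ) (hψd : ∀ e, ψ e ≠ 0 → e ∈ univ.image d) (i : ZMod k) :
    Real.sign (φ (d i)) * ψ (d i) = Real.sign (φ (d 0)) * ψ (d 0) := by
  have hsum := sum_smul_xvec_eq_of_isConformalStep hU hd hψd
  rw [hψ] at hsum
  refine ZMod.apply_eq_apply_zero_of_forall_sub_one
    (c := fun j => Real.sign (φ (d j)) * ψ (d j)) (fun j => ?_) i
  have hj := congrFun hsum (U j)
  rw [Pi.zero_apply, sum_smul_single_sub_single_apply hU] at hj
  exact sub_eq_zero.mp hj.symm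

theorem isSignedCycle_of_isConformalStep [Fintype E] [DecidableEq V] [DecidableEq E]
    (hU : Injective U) (hd : ∀ j, IsConformalStep t h φ (U j) (U (j + 1)) (d j)) :
    IsSignedCycle t h ((univ.image d).filter (0 < φ ·)) ((univ.image d).filter (φ · < 0)) := by
  set Cp := (univ.image d).filter (0 < φ ·)
  set Cm := (univ.image d).filter (φ · < 0)
  have hunion : Cp ∪ Cm = univ.image d := by
    rw [← filter_or, filter_true_of_mem]
    rintro _ hj
    obtain ⟨j, -, rfl⟩ := mem_image.mp hj
    exact (hd j).ne_zero.symm.lt_or_gt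
  have hsign (j : ZMod k) : Real.sign (φ (d j)) * chiVec Cp Cm (d j) = 1 := by
    rcases lt_or_gt_of_ne (hd j).ne_zero with hφ | hφ <;>
      simp [chiVec, Cp, Cm, hφ, hφ.not_gt, Real.sign_of_neg, Real.sign_of_pos]
  have hchi_supp (e : E) (he : chiVec Cp Cm e ≠ 0) : e ∈ univ.image d := by
    rw [← hunion, mem_union]
    by_contra! hn
    simp [chiVec, hn.1, hn.2] at he
  refine ⟨disjoint_filter.2 fun _ _ hp hm => lt_asymm hp hm, ?_, ?_, ?_⟩
  · rw [hunion]
    exact univ_nonempty.image d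
  · rw [IsCirculation, sum_smul_xvec_eq_of_isConformalStep hU hd hchi_supp]
    simp only [hsign, one_smul, sum_sub_distrib]
    rw [sub_eq_zero]
    exact Equiv.sum_comp (Equiv.addRight 1) fun j => (Pi.single (U j) 1 : V → ℝ)
  · intro ψ hψ hψ0 hψd
    rw [hunion] at hψd ⊢
    have hconst := sign_mul_apply_eq_of_isConformalStep hU hd hψ hψd
    obtain ⟨e, he⟩ := Function.ne_iff.mp hψ0
    obtain ⟨j, -, rfl⟩ := mem_image.mp (hψd e he)
    have hj : Real.sign (φ (d j)) * ψ (d j) ≠ 0 :=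
      mul_ne_zero (Real.sign_eq_zero_iff.not.mpr (hd j).ne_zero) he
    rintro _ hi
    obtain ⟨i, -, rfl⟩ := mem_image.mp hi
    rw [hconst, ← hconst i] at hj
    exact right_ne_zero_of_mul hj

end ConformalCycle

theorem IsCirculation.exists_conformal_cycle [Finite V] [Fintype E] [DecidableEq V]
    {φ : E → ℝ} (hφ : IsCirculation t h φ) (hφ0 : φ ≠ 0) :
    ∃ (k : ℕ) (_ : NeZero k) (U : ZMod k → V) (d : ZMod k → E),
      Injective U ∧ ∀ j, IsConformalStep t h φ (U j) (U (j + 1)) (d j) := by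
  obtain ⟨e, he⟩ : ∃ e, φ e ≠ 0 := Function.ne_iff.mp hφ0
  by_cases hloop : t e = h e
  · refine ⟨1, inferInstance, fun _ => t e, fun _ => e, injective_of_subsingleton _, fun _ => ?_⟩
    rcases he.lt_or_gt with hneg | hpos
    · exact Or.inr ⟨hneg, hloop.symm, rfl⟩
    · exact Or.inl ⟨hpos, rfl, hloop.symm⟩
  -- By conservation, flow can leave every vertex it enters, so following it defines a
  -- successor map on the vertices with outgoing flow; a cycle of that map is the cycle sought.
  let W := {v : V // ∃ g, φ g * xvec t h g v < 0}
  have hnext (v : W) : ∃ g, ∃ w : W, IsConformalStep t h φ v w g := by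
    obtain ⟨g, hg⟩ := v.2
    obtain ⟨w, hwv, hs⟩ := exists_isConformalStep_of_mul_xvec_neg hg
    exact ⟨g, ⟨w, hφ.exists_mul_xvec_neg (hs.mul_xvec_target_pos hwv.symm)⟩, hs⟩
  choose g nxt hstep using hnext
  have : Nonempty W := by
    rcases he.lt_or_gt with hneg | hpos
    · exact ⟨⟨h e, e, by simp [xvec, Ne.symm hloop, hneg]⟩⟩
    · exact ⟨⟨t e, e, by simp [xvec, hloop, hpos]⟩⟩
  obtain ⟨k, hk, x, hx, hxs⟩ := exists_injective_zmod_iterate nxt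
  exact ⟨k, hk, fun j => x j, fun j => g (x j), Subtype.val_injective.comp hx,
    fun j => by simpa only [hxs j] using hstep (x j)⟩

theorem IsCirculation.exists_isSignedCycle_conformal [Finite V] [Fintype E] [DecidableEq V]
    [DecidableEq E] {φ : E → ℝ} (hφ : IsCirculation t h φ) (hφ0 : φ ≠ 0) :
    ∃ Cp Cm, IsSignedCycle t h Cp Cm ∧ (∀ f ∈ Cp, 0 < φ f) ∧ ∀ f ∈ Cm, φ f < 0 := by
  obtain ⟨k, _, U, d, hU, hd⟩ := hφ.exists_conformal_cycle hφ0
  exact ⟨_, _, isSignedCycle_of_isConformalStep hU hd, fun f hf => (mem_filter.mp hf).2,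
    fun f hf => (mem_filter.mp hf).2⟩

theorem single_sub_single_mem_span_of_reachable [DecidableEq V] {S : Set E} {u v : V}
    (huv : (underlyingOn t h S).Reachable u v) :
    (Pi.single u 1 - Pi.single v 1 : V → ℝ) ∈ Submodule.span ℝ (xvec t h '' S) := by
  obtain ⟨p⟩ := huv
  induction p with
  | nil => simp
  | @cons a b c hab _ ih =>
    rw [← sub_add_sub_cancel _ (Pi.single b 1 : V → ℝ)]
    refine add_mem ?_ ih
    obtain ⟨-, ⟨f, hf, rfl, rfl⟩ | ⟨f, hf, rfl, rfl⟩⟩ := hab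
    · rw [← neg_sub, ← xvec_eq_single_sub_single]
      exact neg_mem (Submodule.subset_span ⟨f, hf, rfl⟩)
    · rw [← xvec_eq_single_sub_single]
      exact Submodule.subset_span ⟨f, hf, rfl⟩

theorem linearIndependent_single_sub_single [DecidableEq V] (v₀ : V) :
    LinearIndependent ℝ fun v : {v // v ≠ v₀} =>
      (Pi.single (v : V) 1 - Pi.single v₀ 1 : V → ℝ) := by
  refine LinearIndependent.of_comp (LinearMap.funLeft ℝ ℝ (Subtype.val : {v // v ≠ v₀} → V)) ?_
  convert Pi.linearIndependent_single_one {v // v ≠ v₀} ℝ with v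
  ext w
  simp [Pi.single_apply, Subtype.ext_iff, w.2]

section SpanningTree

variable [Fintype V] [DecidableEq V]

theorem IsSpanningTree.linearIndepOn_xvec {T : Finset E} (hT : IsSpanningTree t h T) :
    LinearIndepOn ℝ (xvec t h) ↑T := by
  obtain ⟨hconn, hcard⟩ := hT
  obtain ⟨v₀⟩ := hconn.nonempty
  have hle : Fintype.card {v // v ≠ v₀} ≤ Module.finrank ℝ (Submodule.span ℝ (xvec t h '' ↑T)) := by
    rw [← finrank_span_eq_card (linearIndependent_single_sub_single v₀)]
    refine Submodule.finrank_mono (Submodule.span_le.mpr ?_)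
    rintro _ ⟨v, rfl⟩
    exact single_sub_single_mem_span_of_reachable (hconn.preconnected _ _)
  rw [LinearIndepOn, linearIndependent_iff_card_le_finrank_span, Set.finrank,
    ← Set.image_eq_range]
  simp only [Fintype.card_subtype_compl, Fintype.card_unique, Finset.coe_sort_coe,
    Fintype.card_coe] at hle ⊢
  omega

theorem IsSpanningTree.eq_zero_of_isCirculation [Fintype E] {T : Finset E}
    (hT : IsSpanningTree t h T) {φ : E → ℝ} (hφ : IsCirculation t h φ)
    (hφT : ∀ f, φ f ≠ 0 → f ∈ T) : φ = 0 := by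
  have hsum : ∑ f ∈ T, φ f • xvec t h f = 0 := by
    rw [sum_subset (subset_univ T) fun f _ hf => by rw [not_imp_comm.mp (hφT f) hf, zero_smul]]
    exact hφ
  funext f
  by_cases hf : f ∈ T
  · exact linearIndepOn_finset_iff.mp hT.linearIndepOn_xvec φ hsum f hf
  · exact not_imp_comm.mp (hφT f) hf

theorem IsSpanningTree.exists_isCirculation_apply_eq_one [Fintype E] [DecidableEq E]
    {T : Finset E} (hT : IsSpanningTree t h T) {f : E} (hf : f ∉ T) :
    ∃ φ : E → ℝ, IsCirculation t h φ ∧ φ f = 1 ∧ ∀ g, φ g ≠ 0 → g ∈ insert f T := by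
  have hspan : xvec t h f ∈ Submodule.span ℝ (xvec t h '' ↑T) := by
    rw [xvec_eq_single_sub_single]
    exact single_sub_single_mem_span_of_reachable (hT.1.preconnected _ _)
  obtain ⟨l, hlT, hl⟩ := (Finsupp.mem_span_image_iff_linearCombination ℝ).mp hspan
  rw [Finsupp.mem_supported'] at hlT
  refine ⟨(Pi.single f 1 : E → ℝ) - ⇑l, ?_, by simp [hlT f (by simpa using hf)], fun g hg => ?_⟩
  · rw [IsCirculation]
    simp [sub_smul, sum_sub_distrib, Pi.single_apply, ← hl, Finsupp.linearCombination_apply,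
      Finsupp.sum_fintype]
  · by_contra hgT
    rw [mem_insert, not_or] at hgT
    simp [hgT.1, hlT g (by simpa using hgT.2)] at hg

end SpanningTree

section Signature

variable [DecidableEq E] {Cp Cm : Finset E} {σ : Set (Finset E × Finset E)}

theorem chiVec_swap (Cp Cm : Finset E) : chiVec Cm Cp = -chiVec Cp Cm := by
  funext f
  simp [chiVec]

theorem chiVec_eq_zero_of_notMem_union {f : E} (hf : f ∉ Cp ∪ Cm) : chiVec Cp Cm f = 0 := by
  rw [mem_union, not_or] at hf
  simp [chiVec, hf.1, hf.2]

theorem IsAcyclicSig.sum_chiVec_ne_zero (hac : IsAcyclicSig σ) {ι : Type*} {s : Finset ι}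
    (hs : s.Nonempty) {q : ι → Finset E × Finset E} (hq : ∀ i ∈ s, q i ∈ σ) :
    ∑ i ∈ s, chiVec (q i).1 (q i).2 ≠ 0 := by
  classical
  rw [sum_comp (fun C => chiVec C.1 C.2) q]
  simp only [← Nat.cast_smul_eq_nsmul ℝ]
  obtain ⟨i, hi⟩ := hs
  refine hac _ (fun C => (#{j ∈ s | q j = C} : ℝ)) ?_ (fun _ => Nat.cast_nonneg _)
    ⟨q i, mem_image_of_mem q hi, ?_⟩
  · rintro _ hC
    obtain ⟨j, hj, rfl⟩ := mem_image.mp hC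
    exact hq j hj
  · exact Nat.cast_ne_zero.mpr (card_ne_zero.mpr ⟨i, mem_filter.mpr ⟨hi, rfl⟩⟩)

variable [Fintype E] [DecidableEq V]

theorem IsSignedCycle.swap (hC : IsSignedCycle t h Cp Cm) : IsSignedCycle t h Cm Cp := by
  obtain ⟨hdisj, hne, hcirc, hmin⟩ := hC
  refine ⟨hdisj.symm, union_comm Cp Cm ▸ hne, ?_, union_comm Cp Cm ▸ hmin⟩
  rw [IsCirculation, chiVec_swap]
  simp only [Pi.neg_apply, neg_smul, sum_neg_distrib]
  rw [hcirc, neg_zero]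

theorem IsSignedCycle.chiVec_ne_zero (hC : IsSignedCycle t h Cp Cm) : chiVec Cp Cm ≠ 0 := by
  obtain ⟨f, hf⟩ := hC.2.1
  intro h0
  have hf0 := congrFun h0 f
  rcases mem_union.mp hf with hp | hm
  · simp [chiVec, hp, disjoint_left.mp hC.1 hp] at hf0
  · simp [chiVec, hm, disjoint_right.mp hC.1 hm] at hf0

theorem IsCircuitSignature.mem_or_swap_mem (hσ : IsCircuitSignature t h σ)
    (hC : IsSignedCycle t h Cp Cm) :
    (Cp, Cm) ∈ σ ∨ (Cm, Cp) ∈ σ :=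
  or_iff_not_imp_right.mpr (hσ.2 Cp Cm hC).mpr

variable [Fintype V]

theorem exists_fundamentalCycle_mem (hσ : IsCircuitSignature t h σ) {T : Finset E}
    (hT : T ∈ treeSet t h σ) {f : E} (hf : f ∉ T) :
    ∃ C ∈ σ, f ∈ C.1 ∧ C.1 ∪ C.2 ⊆ insert f T := by
  obtain ⟨φ, hφ, hφf, hφT⟩ := hT.1.exists_isCirculation_apply_eq_one hf
  obtain ⟨Dp, Dm, hD, hDp, hDm⟩ :=
    hφ.exists_isSignedCycle_conformal fun h0 => by simp [h0] at hφf
  have hDT : Dp ∪ Dm ⊆ insert f T := fun e he => hφT e <| by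
    rcases mem_union.mp he with he | he
    exacts [(hDp e he).ne', (hDm e he).ne]
  have hfD : f ∈ Dp ∪ Dm := by
    by_contra hfD
    refine hD.chiVec_ne_zero (hT.1.eq_zero_of_isCirculation hD.2.2.1 fun e he => ?_)
    have he' := hDT (not_imp_comm.mp chiVec_eq_zero_of_notMem_union he)
    refine (mem_insert.mp he').resolve_left ?_
    rintro rfl
    exact he (chiVec_eq_zero_of_notMem_union hfD)
  rcases hσ.mem_or_swap_mem hD with hmem | hmem
  · exact ⟨_, hmem, hT.2 f hf Dp Dm hmem hDT, hDT⟩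
  · rw [union_comm] at hDT
    exact ⟨_, hmem, hT.2 f hf Dm Dp hmem hDT, hDT⟩

theorem not_subset_of_mem_treeSet (hσ : IsCircuitSignature t h σ) (hac : IsAcyclicSig σ)
    {T : Finset E} (hT : T ∈ treeSet t h σ) {Ap Am : Finset E} (hA : (Ap, Am) ∈ σ) :
    ¬ Ap ⊆ T := by
  intro hApT
  set N := Am \ T
  choose! F hFσ hfF hFT using fun f (hf : f ∈ N) =>
    exists_fundamentalCycle_mem hσ hT (mem_sdiff.mp hf).2
  set q : Option E → Finset E × Finset E := fun o => o.elim (Ap, Am) F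
  have hq : ∀ o ∈ insertNone N, q o ∈ σ := by
    rintro (_ | f) hf
    exacts [hA, hFσ f (some_mem_insertNone.mp hf)]
  refine hac.sum_chiVec_ne_zero insertNone_nonempty hq ?_
  refine hT.1.eq_zero_of_isCirculation (isCirculation_sum _ fun o ho => (hσ.1 _ (hq o ho)).2.2.1)
    fun e he => ?_
  by_contra heT
  have hF (f : E) (hf : f ∈ N) : chiVec (F f).1 (F f).2 e = if e = f then 1 else 0 := by
    split_ifs with hef
    · subst hef
      simp [chiVec, hfF e hf, disjoint_left.mp (hσ.1 _ (hFσ e hf)).1 (hfF e hf)]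
    · exact chiVec_eq_zero_of_notMem_union fun he' => by
        rcases mem_insert.mp (hFT f hf he') with h' | h'
        exacts [hef h', heT h']
  apply he
  rw [Finset.sum_apply, sum_insertNone]
  simp only [q, Option.elim]
  rw [sum_congr rfl hF, sum_ite_eq]
  have heA : e ∉ Ap := fun he' => heT (hApT he')
  by_cases heAm : e ∈ Am <;> simp [chiVec, heA, heAm, N, heT]

end Signature

end Graph

/-- for an acyclic circuit signature `σ`, any two distinct trees in
`tree(D,σ)` give simplices `Q̃_T` with disjoint (relative) interiors. -/
theorem stmt7 {V E : Type*} [Fintype V] [Fintype E] [DecidableEq V] [DecidableEq E]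
    (t h : E → V) (σ : Set (Finset E × Finset E))
    (hσ : IsCircuitSignature t h σ) (hac : IsAcyclicSig σ)
    (T1 T2 : Finset E) (h1 : T1 ∈ treeSet t h σ) (h2 : T2 ∈ treeSet t h σ)
    (hne : T1 ≠ T2) :
    Disjoint (intrinsicInterior ℝ (rootPolyOn t h ↑T1))
      (intrinsicInterior ℝ (rootPolyOn t h ↑T2)) := by
  refine Set.disjoint_left.mpr fun p hp₁ hp₂ => ?_
  obtain ⟨a₁, ha₁, ha₁T, rfl⟩ := exists_pos_of_mem_intrinsicInterior_rootPolyOn hp₁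
  obtain ⟨a₂, ha₂, ha₂T, ha⟩ := exists_pos_of_mem_intrinsicInterior_rootPolyOn hp₂
  have hcirc : IsCirculation t h (a₁ - a₂) := by
    simp [IsCirculation, sub_smul, Finset.sum_sub_distrib, ha]
  obtain ⟨f, hf₁, hf₂⟩ : ∃ f ∈ T1, f ∉ T2 := by
    by_contra! hsub
    exact hne (Finset.eq_of_subset_of_card_le hsub (by have := h1.1.2; have := h2.1.2; omega))
  have hne0 : a₁ - a₂ ≠ 0 := fun h0 => by
    have hf := congrFun h0 f
    simp only [Pi.sub_apply, Pi.zero_apply, sub_eq_zero] at hf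
    exact hf₂ ((ha₂T f).mp (hf ▸ (ha₁T f).mpr hf₁))
  obtain ⟨Cp, Cm, hC, hCp, hCm⟩ := hcirc.exists_isSignedCycle_conformal hne0
  rcases hσ.mem_or_swap_mem hC with hmem | hmem
  · refine not_subset_of_mem_treeSet hσ hac h1 hmem fun e he => (ha₁T e).mp ?_
    linarith [hCp e he, show 0 ≤ a₂ e from ha₂ e, show (a₁ - a₂) e = a₁ e - a₂ e from rfl]
  · refine not_subset_of_mem_treeSet hσ hac h2 hmem fun e he => (ha₂T e).mp ?_
    linarith [hCm e he, show 0 ≤ a₁ e from ha₁ e, show (a₁ - a₂) e = a₁ e - a₂ e from rfl]
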